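/- arXiv:math/0508503 — 6 statements merged into one kernel-verified Lean document; each statement's English description precedes it below -/
import Mathlib

section
/- The function d((x_1,...,x_n),(y_1,...,y_n)) = min over permutations π of max_i |x_i - y_{π(i)}| equals max_i |x_{(i)} - y_{(i)}|, where x_{(i)} and y_{(i)} denote the i-th order statistics of the two samples. -/
/-!
Sorting both tuples reduces the problem to monotone `x` and `y`, and then the identity matching
is optimal. Indeed, for any permutation `π` and index `i`, a counting argument gives some `j ≤ i`
with `π j ≥ i` (and some `j ≥ i` with `π j ≤ i`); if `x i ≤ y i`, monotonicity gives
`y (π j) - x j ≥ y i - x i`, so the matching `π` has a gap at least `|x i - y i|` (symmetrically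
if `y i ≤ x i`).
-/

open Finset

theorem Equiv.Perm.exists_le_le_apply {α : Type*} [LinearOrder α] [LocallyFiniteOrderBot α]
    (π : Equiv.Perm α) (i : α) : ∃ j ≤ i, i ≤ π j := by
  by_contra! h
  have hcard : #(Iic i) ≤ #(Iio i) :=
    card_le_card_of_injOn π (fun j hj => by simpa using h j (by simpa using hj))
      π.injective.injOn
  rw [Iic_eq_cons_Iio, card_cons] at hcard
  omega

theorem Equiv.Perm.exists_le_apply_le {α : Type*} [LinearOrder α] [LocallyFiniteOrderBot α]
    (π : Equiv.Perm α) (i : α) : ∃ j, i ≤ j ∧ π j ≤ i := by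
  obtain ⟨j, hji, hij⟩ := Equiv.Perm.exists_le_le_apply π.symm i
  exact ⟨π.symm j, hij, by simpa using hji⟩

theorem Monotone.exists_abs_sub_le_abs_sub_apply_perm {α β : Type*} [LinearOrder α]
    [LocallyFiniteOrderBot α] [AddCommGroup β] [LinearOrder β] [IsOrderedAddMonoid β]
    {x y : α → β} (hx : Monotone x) (hy : Monotone y) (π : Equiv.Perm α) (i : α) :
    ∃ j, |x i - y i| ≤ |x j - y (π j)| := by
  rcases le_total (x i) (y i) with hxy | hyx
  · obtain ⟨j, hji, hij⟩ := π.exists_le_le_apply i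
    refine ⟨j, ?_⟩
    calc |x i - y i| = y i - x i := by rw [abs_sub_comm, abs_of_nonneg (sub_nonneg.2 hxy)]
      _ ≤ y (π j) - x j := sub_le_sub (hy hij) (hx hji)
      _ ≤ |x j - y (π j)| := abs_sub_comm (x j) _ ▸ le_abs_self _
  · obtain ⟨j, hij, hji⟩ := π.exists_le_apply_le i
    refine ⟨j, ?_⟩
    calc |x i - y i| = x i - y i := abs_of_nonneg (sub_nonneg.2 hyx)
      _ ≤ x j - y (π j) := sub_le_sub (hx hij) (hy hji)
      _ ≤ |x j - y (π j)| := le_abs_self _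

theorem min_perm_matching_eq_order_statistics {n : ℕ} (hn : 0 < n) (x y : Fin n → ℝ) :
    (univ.inf' (univ_nonempty_iff.mpr ⟨1⟩) fun π : Equiv.Perm (Fin n) =>
      univ.sup' (univ_nonempty_iff.mpr ⟨⟨0, hn⟩⟩) fun i => |x i - y (π i)|) =
    univ.sup' (univ_nonempty_iff.mpr ⟨⟨0, hn⟩⟩)
      fun i => |x (Tuple.sort x i) - y (Tuple.sort y i)| := by
  set σ := Tuple.sort x
  set τ := Tuple.sort y
  have hx : Monotone (x ∘ σ) := Tuple.monotone_sort x
  have hy : Monotone (y ∘ τ) := Tuple.monotone_sort y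
  apply le_antisymm
  · refine inf'_le_of_le _ (mem_univ (σ.symm.trans τ)) (sup'_le _ _ fun i _ => ?_)
    exact le_sup'_of_le _ (mem_univ (σ.symm i)) (by simp)
  · refine le_inf' _ _ fun π _ => sup'_le _ _ fun i _ => ?_
    obtain ⟨j, hj⟩ := hx.exists_abs_sub_le_abs_sub_apply_perm hy (σ.trans (π.trans τ.symm)) i
    simp only [Function.comp_apply, Equiv.trans_apply, Equiv.apply_symm_apply] at hj
    exact hj.trans (le_sup' (fun k => |x k - y (π k)|) (mem_univ (σ j)))
end

section
/- If a finite set X of n > k points in ℝ^k is in general position (no affine hyperplane contains more than k of the points), then for any point θ ∈ ℝ^k not in X, there exists an affine hyperplane L containing exactly k points of X such that θ and all remaining points of X lie strictly on the same open side of L. -/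
attribute [local instance] Classical.propDecidable

/-- A finite set in ℝ^k is in general position if no affine hyperplane
contains more than k of its points. -/
def InGeneralPosition {k : ℕ} (X : Finset (EuclideanSpace ℝ (Fin k))) : Prop :=
  ∀ (u : EuclideanSpace ℝ (Fin k)) (c : ℝ), u ≠ 0 →
    (X.filter fun x => (inner ℝ u x : ℝ) = c).card ≤ k

/-!
Start from the trivial half-space `{z | -1 ≤ ⟪0, z⟫}`, which contains `X` and has `θ` in its
interior, and rotate its boundary hyperplane about the points `S` of `X` on it. While `S` has
fewer than `k` points, some nonzero `w` is orthogonal to `S - θ`; since `X` lies in no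
hyperplane, `w` can be chosen with `⟪w, x₀⟫ < ⟪w, θ⟫` for some `x₀ ∈ X`. Tilting `(u, c)` to
`(u + t w, c + t ⟪w, θ⟫)` for the largest admissible `t > 0` keeps `S` on the hyperplane and `θ`
strictly above it, and picks up a new point of `X`. General position stops the process at
exactly `k` points.
-/

open Finset Module

variable {E : Type*} [NormedAddCommGroup E] [InnerProductSpace ℝ E]

theorem exists_ne_zero_forall_inner_eq_zero [FiniteDimensional ℝ E] (s : Finset E)
    (hs : #s < finrank ℝ E) : ∃ v ≠ 0, ∀ x ∈ s, inner ℝ v x = 0 := by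
  have hK : Submodule.span ℝ (s : Set E) ≠ ⊤ := by
    intro h
    have := finrank_span_finset_le_card (R := ℝ) s
    rw [Set.finrank, h, finrank_top] at this
    omega
  obtain ⟨v, hvK, hv⟩ := Submodule.exists_mem_ne_zero_of_ne_bot
    (mt Submodule.orthogonal_eq_bot_iff.mp hK)
  exact ⟨v, hv, fun x hx =>
    Submodule.inner_left_of_mem_orthogonal (Submodule.subset_span hx) hvK⟩

theorem Finset.exists_largest_mul_le {ι : Type*} (s : Finset ι) (a b : ι → ℝ)
    (ha : ∀ i ∈ s, 0 ≤ a i) (hab : ∀ i ∈ s, 0 < b i → 0 < a i)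
    (hb : ∃ i ∈ s, 0 < b i) :
    ∃ t > 0, (∀ i ∈ s, t * b i ≤ a i) ∧ ∃ i ∈ s, 0 < b i ∧ t * b i = a i := by
  obtain ⟨j, hj, hmin⟩ := (s.filter (0 < b ·)).exists_min_image (fun i => a i / b i)
    (by simpa [Finset.Nonempty] using hb)
  rw [mem_filter] at hj
  refine ⟨a j / b j, div_pos (hab j hj.1 hj.2) hj.2, fun i hi => ?_, j, hj.1, hj.2,
    div_mul_cancel₀ _ hj.2.ne'⟩
  rcases le_or_gt (b i) 0 with hbi | hbi
  · nlinarith [ha i hi, div_pos (hab j hj.1 hj.2) hj.2]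
  · exact (le_div_iff₀ hbi).mp (hmin i (mem_filter.mpr ⟨hi, hbi⟩))

noncomputable def contactSet (X : Finset E) (u : E) (c : ℝ) : Finset E :=
  X.filter fun x => inner ℝ u x = c

def WeaklySupports (X : Finset E) (θ u : E) (c : ℝ) : Prop :=
  (∀ x ∈ X, c ≤ inner ℝ u x) ∧ c < inner ℝ u θ

theorem contactSet_smul (X : Finset E) (u : E) (c : ℝ) {r : ℝ} (hr : r ≠ 0) :
    contactSet X (r • u) (r * c) = contactSet X u c := by
  simp only [contactSet, real_inner_smul_left, mul_right_inj' hr]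

namespace WeaklySupports

variable {X : Finset E} {θ u : E} {c : ℝ}

theorem zero_neg_one (X : Finset E) (θ : E) : WeaklySupports X θ 0 (-1) := by
  simp [WeaklySupports]

theorem ne_zero (h : WeaklySupports X θ u c) (hX : (contactSet X u c).Nonempty) : u ≠ 0 := by
  rintro rfl
  obtain ⟨x, hx⟩ := hX
  have hxc := (mem_filter.mp hx).2
  have hθ := h.2
  rw [inner_zero_left] at hθ hxc
  linarith

theorem smul (h : WeaklySupports X θ u c) {r : ℝ} (hr : 0 < r) :
    WeaklySupports X θ (r • u) (r * c) := by
  simp only [WeaklySupports, real_inner_smul_left]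
  exact ⟨fun x hx => mul_le_mul_of_nonneg_left (h.1 x hx) hr.le, mul_lt_mul_of_pos_left h.2 hr⟩

theorem lt_of_ne (h : WeaklySupports X θ u c) {x : E} (hx : x ∈ X) (hne : inner ℝ u x ≠ c) :
    c < inner ℝ u x :=
  (h.1 x hx).lt_of_ne hne.symm

theorem exists_contactSet_ssubset [FiniteDimensional ℝ E] (h : WeaklySupports X θ u c)
    (hcard : #(contactSet X u c) < finrank ℝ E)
    (hX : ∀ v ≠ (0 : E), ∀ d : ℝ, ∃ x ∈ X, inner ℝ v x ≠ d) :
    ∃ u' c', WeaklySupports X θ u' c' ∧ contactSet X u c ⊂ contactSet X u' c' := by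
  set S := contactSet X u c
  obtain ⟨v, hv, hvS⟩ :=
    exists_ne_zero_forall_inner_eq_zero (S.image (· - θ)) (card_image_le.trans_lt hcard)
  obtain ⟨w, hwS, x₀, hx₀, hwx₀⟩ :
      ∃ w : E, (∀ x ∈ S, inner ℝ w x = inner ℝ w θ) ∧
        ∃ x₀ ∈ X, inner ℝ w x₀ < inner ℝ w θ := by
    have hvS' : ∀ x ∈ S, inner ℝ v x = inner ℝ v θ := fun x hx => by
      simpa [inner_sub_right, sub_eq_zero] using hvS _ (mem_image_of_mem _ hx)
    obtain ⟨x₀, hx₀, hne⟩ := hX v hv (inner ℝ v θ)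
    rcases hne.lt_or_gt with hlt | hgt
    · exact ⟨v, hvS', x₀, hx₀, hlt⟩
    · exact ⟨-v, fun x hx => by simp [inner_neg_left, hvS' x hx], x₀, hx₀,
        by simpa [inner_neg_left] using hgt⟩
  have hS : ∀ x ∈ X, inner ℝ u x = c → x ∈ S := fun x hx hxc =>
    mem_filter.mpr ⟨hx, hxc⟩
  obtain ⟨t, ht, hle, x₁, hx₁, hb, heq⟩ := X.exists_largest_mul_le
    (fun x => inner ℝ u x - c) (fun x => inner ℝ w θ - inner ℝ w x)
    (fun x hx => sub_nonneg.mpr (h.1 x hx))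
    (fun x hx hbx => sub_pos.mpr (h.lt_of_ne hx fun hxc => by linarith [hwS x (hS x hx hxc)]))
    ⟨x₀, hx₀, sub_pos.mpr hwx₀⟩
  have hinner : ∀ x, inner ℝ (u + t • w) x = inner ℝ u x + t * inner ℝ w x := fun x => by
    rw [inner_add_left, real_inner_smul_left]
  refine ⟨u + t • w, c + t * inner ℝ w θ, ⟨fun x hx => ?_, ?_⟩, ?_⟩
  · rw [hinner]
    linarith [hle x hx]
  · rw [hinner]
    linarith [h.2]
  · refine (ssubset_iff_of_subset fun x hx => ?_).mpr ⟨x₁, ?_, fun hx₁S => ?_⟩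
    · obtain ⟨hxX, hxc⟩ := mem_filter.mp hx
      exact mem_filter.mpr ⟨hxX, by rw [hinner, hxc, hwS x hx]⟩
    · exact mem_filter.mpr ⟨hx₁, by rw [hinner]; linarith⟩
    · have := (mem_filter.mp hx₁S).2
      nlinarith

theorem exists_finrank_le_card_contactSet [FiniteDimensional ℝ E]
    (h : WeaklySupports X θ u c)
    (hX : ∀ v ≠ (0 : E), ∀ d : ℝ, ∃ x ∈ X, inner ℝ v x ≠ d) :
    ∃ u' c', WeaklySupports X θ u' c' ∧ finrank ℝ E ≤ #(contactSet X u' c') := by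
  induction hm : finrank ℝ E - #(contactSet X u c) using Nat.strong_induction_on
    generalizing u c with
  | _ m ih =>
    by_cases hk : finrank ℝ E ≤ #(contactSet X u c)
    · exact ⟨u, c, h, hk⟩
    obtain ⟨u', c', h', hss⟩ := h.exists_contactSet_ssubset (not_le.mp hk) hX
    exact ih _ (by have := card_lt_card hss; omega) h' rfl

end WeaklySupports

theorem InGeneralPosition.exists_inner_ne {k : ℕ} {X : Finset (EuclideanSpace ℝ (Fin k))}
    (hGP : InGeneralPosition X) (hk : k < #X) {v : EuclideanSpace ℝ (Fin k)} (hv : v ≠ 0)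
    (d : ℝ) : ∃ x ∈ X, inner ℝ v x ≠ d := by
  by_contra! h
  have := hGP v d hv
  rw [filter_true_of_mem h] at this
  omega

theorem exists_supporting_hyperplane_general {k n : ℕ} (hk : 2 ≤ k) (hkn : k < n)
    (X : Finset (EuclideanSpace ℝ (Fin k))) (hX : X.card = n)
    (hGP : InGeneralPosition X) (θ : EuclideanSpace ℝ (Fin k)) :
    ∃ (u : EuclideanSpace ℝ (Fin k)) (c : ℝ), ‖u‖ = 1 ∧
      (X.filter fun x => (inner ℝ u x : ℝ) = c).card = k ∧
      c < (inner ℝ u θ : ℝ) ∧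
      ∀ x ∈ X, (inner ℝ u x : ℝ) ≠ c → c < (inner ℝ u x : ℝ) := by
  obtain ⟨u, c, h, hcard⟩ :=
    (WeaklySupports.zero_neg_one X θ).exists_finrank_le_card_contactSet
      fun v hv d => hGP.exists_inner_ne (hX ▸ hkn) hv d
  rw [finrank_euclideanSpace_fin] at hcard
  have hu : u ≠ 0 := h.ne_zero (card_pos.mp (by omega))
  have hr : 0 < ‖u‖⁻¹ := inv_pos.mpr (norm_pos_iff.mpr hu)
  refine ⟨‖u‖⁻¹ • u, ‖u‖⁻¹ * c, ?_, ?_, (h.smul hr).2,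
    fun x hx hne => (h.smul hr).lt_of_ne hx hne⟩
  · exact norm_smul_inv_norm hu
  · exact (congrArg card (contactSet_smul X u c hr.ne')).trans ((hGP u c hu).antisymm hcard)

theorem exists_supporting_hyperplane {k n : ℕ} (hk : 2 ≤ k) (hkn : k < n)
    (X : Finset (EuclideanSpace ℝ (Fin k))) (hX : X.card = n)
    (hGP : InGeneralPosition X) (θ : EuclideanSpace ℝ (Fin k)) (hθ : θ ∉ X) :
    ∃ (u : EuclideanSpace ℝ (Fin k)) (c : ℝ), ‖u‖ = 1 ∧
      (X.filter fun x => (inner ℝ u x : ℝ) = c).card = k ∧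
      c < (inner ℝ u θ : ℝ) ∧
      ∀ x ∈ X, (inner ℝ u x : ℝ) ≠ c → c < (inner ℝ u x : ℝ) :=
  exists_supporting_hyperplane_general hk hkn X hX hGP θ
end

section
/- Let X ⊂ ℝ^k be finite and in general position with n > k points. A weighted mean T(X) = (Σ_i w_i x_i)/(Σ_i w_i) with weights 0 ≤ w_i ≤ 1 and at least k+1 weights equal to 1 satisfies condition (C_k): for any unit vector u such that the inner products y_i = u·x_i satisfy y_1 = ... = y_k < y_{k+1} ≤ ... ≤ y_n (after renumbering), one has u·T(X) ≥ y_k + (y_{k+1} - y_k)/n. -/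
attribute [local instance] Classical.propDecidable

open Finset

/-!
Write `y i = ⟪u, x i⟫` and `W = ∑ w i`. Some index `j ≥ k` carries weight `1`, because at most `k`
indices lie below `k`; then `y j ≥ y k` and all `y i ≥ y 0`, so
`∑ w i (y i - y 0) ≥ y j - y 0 ≥ y k - y 0`. Dividing by `W ≤ n` gives the bound.
-/

theorem sum_mul_add_sub_le_sum_mul {ι : Type*} {s : Finset ι} {w y : ι → ℝ} {a b : ℝ} {j : ι}
    (hj : j ∈ s) (hw : ∀ i ∈ s, 0 ≤ w i) (hy : ∀ i ∈ s, a ≤ y i) (hwj : w j = 1)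
    (hyj : b ≤ y j) :
    (∑ i ∈ s, w i) * a + (b - a) ≤ ∑ i ∈ s, w i * y i := by
  have hgap : b - a ≤ ∑ i ∈ s, w i * (y i - a) :=
    calc b - a ≤ w j * (y j - a) := by rw [hwj]; linarith
      _ ≤ ∑ i ∈ s, w i * (y i - a) :=
        single_le_sum (fun i hi => mul_nonneg (hw i hi) (sub_nonneg.2 (hy i hi))) hj
  have hexpand : ∑ i ∈ s, w i * (y i - a) = ∑ i ∈ s, w i * y i - (∑ i ∈ s, w i) * a := by
    simp only [mul_sub, sum_sub_distrib, sum_mul]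
  linarith

theorem add_sub_div_le_weighted_mean {ι : Type*} {s : Finset ι} {w y : ι → ℝ} {a b N : ℝ}
    {j : ι} (hj : j ∈ s) (hw : ∀ i ∈ s, 0 ≤ w i) (hy : ∀ i ∈ s, a ≤ y i) (hwj : w j = 1)
    (hyj : b ≤ y j) (hab : a ≤ b) (hN : ∑ i ∈ s, w i ≤ N) :
    a + (b - a) / N ≤ (∑ i ∈ s, w i)⁻¹ * ∑ i ∈ s, w i * y i := by
  set W := ∑ i ∈ s, w i
  have hW : 0 < W := one_pos.trans_le (hwj ▸ single_le_sum hw hj)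
  have hba : 0 ≤ b - a := sub_nonneg.2 hab
  calc a + (b - a) / N ≤ a + (b - a) / W := by gcongr
    _ = W⁻¹ * (W * a + (b - a)) := by field_simp
    _ ≤ W⁻¹ * ∑ i ∈ s, w i * y i := by
      gcongr
      exact sum_mul_add_sub_le_sum_mul hj hw hy hwj hyj

theorem exists_mem_le_val_of_lt_card {n k : ℕ} {s : Finset (Fin n)} (h : k < #s) :
    ∃ i ∈ s, k ≤ (i : ℕ) := by
  by_contra! hs
  have hsub : s ⊆ univ.filter fun i : Fin n => (i : ℕ) < k := fun i hi => by simpa using hs i hi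
  have := (card_le_card hsub).trans_eq Fin.card_filter_val_lt
  omega

theorem weighted_mean_satisfies_Ck {k n : ℕ} (hkn : k < n)
    (x : Fin n → EuclideanSpace ℝ (Fin k))
    (w : Fin n → ℝ) (hw0 : ∀ i, 0 ≤ w i) (hw1 : ∀ i, w i ≤ 1)
    (hfull : k + 1 ≤ (univ.filter fun i => w i = 1).card)
    (u : EuclideanSpace ℝ (Fin k))
    (hsorted : Monotone fun i : Fin n => (inner ℝ u (x i) : ℝ)) :
    (inner ℝ u (x ⟨0, by omega⟩) : ℝ) +
        ((inner ℝ u (x ⟨k, hkn⟩) : ℝ) - (inner ℝ u (x ⟨0, by omega⟩) : ℝ)) / n ≤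
      (inner ℝ u ((∑ i, w i)⁻¹ • ∑ i, w i • x i) : ℝ) := by
  obtain ⟨j, hj, hkj⟩ := exists_mem_le_val_of_lt_card hfull
  have hwj : w j = 1 := (mem_filter.1 hj).2
  have hW : ∑ i, w i ≤ n := by simpa using sum_le_sum fun i (_ : i ∈ univ) => hw1 i
  simp only [real_inner_smul_right, inner_sum]
  have hbottom : ∀ i : Fin n, (⟨0, by omega⟩ : Fin n) ≤ i := fun i => Fin.le_def.2 i.val.zero_le
  exact add_sub_div_le_weighted_mean (mem_univ j) (fun i _ => hw0 i)
    (fun i _ => hsorted (hbottom i)) hwj (hsorted hkj) (hsorted (hbottom _)) hW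
end

section
/- Let θ ∈ ℝ^k have first coordinate θ_1 > 0 and let M > 0. Let H = {z ∈ ℝ^k : z_1 ≥ α} for some α > 0, let B = closed ball of radius M around θ, and let g_γ be the shear transform. Then for all sufficiently large γ, the intersection B ∩ g_γ(B) ∩ H is empty. -/
/-- The shear transform g_γ relative to an orthonormal basis e_1,...,e_k:
g_γ(e_1) = e_1 + γ e_2 and g_γ(e_j) = e_j for j ≥ 2. -/
noncomputable def shear {k : ℕ} (hk : 2 ≤ k)
    (b : OrthonormalBasis (Fin k) ℝ (EuclideanSpace ℝ (Fin k))) (γ : ℝ) :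
    EuclideanSpace ℝ (Fin k) →ₗ[ℝ] EuclideanSpace ℝ (Fin k) :=
  b.toBasis.constr ℝ fun j =>
    if j = (⟨0, by omega⟩ : Fin k) then b ⟨0, by omega⟩ + γ • b ⟨1, by omega⟩ else b j

/-! The shear moves `x` by `γ x₁` along `e₂`, so `x` and `g_γ x` are at distance `|γ x₁|`. On the
half-space `x₁ ≥ α` (which `g_γ` preserves) this is at least `γ α`, while two points of a ball of
radius `M` are at distance at most `2M`; so the intersection is empty once `γ α > 2M`. -/

open Metric

section Shear

variable {k : ℕ} (hk : 2 ≤ k) (b : OrthonormalBasis (Fin k) ℝ (EuclideanSpace ℝ (Fin k)))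
  (γ : ℝ)

lemma shear_apply (x : EuclideanSpace ℝ (Fin k)) :
    shear hk b γ x = x + (γ * (inner ℝ (b ⟨0, by omega⟩) x : ℝ)) • b ⟨1, by omega⟩ := by
  have key : shear hk b γ = LinearMap.id +
      γ • ((innerSL ℝ (b ⟨0, by omega⟩)).toLinearMap.smulRight (b ⟨1, by omega⟩)) := by
    refine b.toBasis.ext fun j => ?_
    rw [shear, Module.Basis.constr_basis]
    simp only [OrthonormalBasis.coe_toBasis, LinearMap.add_apply, LinearMap.id_apply,
      LinearMap.smul_apply, LinearMap.smulRight_apply, ContinuousLinearMap.coe_coe,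
      innerSL_apply_apply, b.inner_eq_ite]
    by_cases h : j = (⟨0, by omega⟩ : Fin k)
    · subst h; simp
    · simp [h, Ne.symm h]
  simp [key, mul_smul]

lemma inner_basis_zero_shear (x : EuclideanSpace ℝ (Fin k)) :
    (inner ℝ (b ⟨0, by omega⟩) (shear hk b γ x) : ℝ) = inner ℝ (b ⟨0, by omega⟩) x := by
  have h01 : (⟨0, by omega⟩ : Fin k) ≠ ⟨1, by omega⟩ := by simp [Fin.ext_iff]
  rw [shear_apply, inner_add_right, inner_smul_right, b.orthonormal.inner_eq_zero h01, mul_zero,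
    add_zero]

lemma norm_shear_sub (x : EuclideanSpace ℝ (Fin k)) :
    ‖shear hk b γ x - x‖ = |γ * (inner ℝ (b ⟨0, by omega⟩) x : ℝ)| := by
  rw [shear_apply, add_sub_cancel_left, norm_smul, b.orthonormal.1, mul_one, Real.norm_eq_abs]

lemma abs_mul_inner_le_of_mem_closedBall {θ x : EuclideanSpace ℝ (Fin k)} {M : ℝ}
    (hx : x ∈ closedBall θ M) (hgx : shear hk b γ x ∈ closedBall θ M) :
    |γ * (inner ℝ (b ⟨0, by omega⟩) x : ℝ)| ≤ 2 * M := by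
  rw [← norm_shear_sub hk, ← dist_eq_norm]
  calc dist (shear hk b γ x) x ≤ dist (shear hk b γ x) θ + dist x θ := dist_triangle_right _ _ _
    _ ≤ M + M := add_le_add hgx hx
    _ = 2 * M := by ring

end Shear

theorem ball_shearBall_halfspace_eventually_disjoint {k : ℕ} (hk : 2 ≤ k)
    (b : OrthonormalBasis (Fin k) ℝ (EuclideanSpace ℝ (Fin k)))
    (θ : EuclideanSpace ℝ (Fin k))
    (M α : ℝ) (hα : 0 < α) :
    ∃ Γ : ℝ, ∀ γ : ℝ, Γ ≤ γ →
      Metric.closedBall θ M ∩ (shear hk b γ '' Metric.closedBall θ M) ∩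
        {z : EuclideanSpace ℝ (Fin k) | α ≤ (inner ℝ (b ⟨0, by omega⟩) z : ℝ)} = ∅ := by
  refine ⟨(2 * M + 1) / α, fun γ hγ => ?_⟩
  rw [Set.eq_empty_iff_forall_notMem]
  rintro _ ⟨⟨hgx, x, hx, rfl⟩, hH⟩
  rw [Set.mem_ofPred_eq, inner_basis_zero_shear] at hH
  have hγα : 2 * M + 1 ≤ γ * α := (div_le_iff₀ hα).mp hγ
  have hM : 0 ≤ M := dist_nonneg.trans hx
  have hγ_nonneg : 0 ≤ γ := (div_nonneg (by linarith) hα.le).trans hγ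
  refine lt_irrefl (γ * α) ?_
  calc γ * α ≤ γ * inner ℝ (b ⟨0, by omega⟩) x := mul_le_mul_of_nonneg_left hH hγ_nonneg
    _ ≤ |γ * inner ℝ (b ⟨0, by omega⟩) x| := le_abs_self _
    _ ≤ 2 * M := abs_mul_inner_le_of_mem_closedBall hk b γ hx hgx
    _ < 2 * M + 1 := lt_add_one _
    _ ≤ γ * α := hγα
end

section
/- If a location estimator T satisfies depth(T(X), X) ≥ k + 1 for all data sets X of n points in general position in ℝ^k, then T satisfies condition (C_k): for every unit vector u with u·x_1 = ... = u·x_k < u·x_{k+1} ≤ ... ≤ u·x_n (after renumbering), there is α > 0 with u·T(X) ≥ u·x_k + α. -/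
attribute [local instance] Classical.propDecidable

/-! Depth at least `k + 1` in direction `-u` puts `k + 1` points of `X` weakly below `θ` along `u`;
only `k` of them can lie on the supporting face `⟪u, x⟫ = c`, so some point strictly above the
face lies weakly below `θ`. -/

open Finset

theorem lt_of_card_filter_eq_lt_card_filter_le {ι α : Type*} [LinearOrder α]
    {X : Finset ι} {f : ι → α} {a c : α} (hmin : ∀ x ∈ X, c ≤ f x)
    (hcard : #(X.filter (f · = c)) < #(X.filter (f · ≤ a))) : c < a := by
  obtain ⟨x, hx, hx_off⟩ := exists_mem_notMem_of_card_lt_card hcard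
  rw [mem_filter] at hx
  have hcx : c < f x := (hmin x hx.1).lt_of_ne fun h => hx_off (mem_filter.2 ⟨hx.1, h.symm⟩)
  exact hcx.trans_le hx.2

theorem depth_ge_implies_Ck_general {k : ℕ}
    (X : Finset (EuclideanSpace ℝ (Fin k))) (θ : EuclideanSpace ℝ (Fin k))
    (hdepth : ∀ u : EuclideanSpace ℝ (Fin k), ‖u‖ = 1 →
      k + 1 ≤ (X.filter fun x => (inner ℝ u θ : ℝ) ≤ (inner ℝ u x : ℝ)).card)
    (u : EuclideanSpace ℝ (Fin k)) (c : ℝ) (hu : ‖u‖ = 1)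
    (hface : (X.filter fun x => (inner ℝ u x : ℝ) = c).card = k)
    (hmin : ∀ x ∈ X, c ≤ (inner ℝ u x : ℝ)) :
    ∃ α : ℝ, 0 < α ∧ c + α ≤ (inner ℝ u θ : ℝ) := by
  have hbelow : k + 1 ≤ #(X.filter fun x => inner ℝ u x ≤ inner ℝ u θ) := by
    simpa only [inner_neg_left, neg_le_neg_iff] using hdepth (-u) (by rwa [norm_neg])
  have hc : c < inner ℝ u θ := lt_of_card_filter_eq_lt_card_filter_le hmin (by omega)
  exact ⟨inner ℝ u θ - c, sub_pos.2 hc, by linarith⟩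

theorem depth_ge_implies_Ck {k n : ℕ} (hk : 2 ≤ k) (hkn : k < n)
    (X : Finset (EuclideanSpace ℝ (Fin k))) (hX : X.card = n)
    (hGP : InGeneralPosition X) (θ : EuclideanSpace ℝ (Fin k))
    (hdepth : ∀ u : EuclideanSpace ℝ (Fin k), ‖u‖ = 1 →
      k + 1 ≤ (X.filter fun x => (inner ℝ u θ : ℝ) ≤ (inner ℝ u x : ℝ)).card)
    (u : EuclideanSpace ℝ (Fin k)) (c : ℝ) (hu : ‖u‖ = 1)
    (hface : (X.filter fun x => (inner ℝ u x : ℝ) = c).card = k)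
    (hmin : ∀ x ∈ X, c ≤ (inner ℝ u x : ℝ)) :
    ∃ α : ℝ, 0 < α ∧ c + α ≤ (inner ℝ u θ : ℝ) :=
  depth_ge_implies_Ck_general X θ hdepth u c hu hface hmin
end

section
/- Any translation equivariant location estimator on samples of n points in ℝ^k has finite-sample replacement breakdown value at most ⌊(n+1)/2⌋ / n. -/
/-!
With `W` the sample `X` shifted by `-v` off a set `s` of indices, equivariance gives
`T (W + v) - T W = v`; since `W + v` differs from `X` only on `s` and `W` only off `s`, one of
the two is an estimate more than `‖v‖ / 2` away from `T X`. Taking `#s = ⌊(n+1)/2⌋` makes both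
replace at most `⌊(n+1)/2⌋` points, and `‖v‖` can be made arbitrarily large.
-/

attribute [local instance] Classical.propDecidable

open Finset

def TranslationEquivariant {ι E : Type*} [Add E] (T : (ι → E) → E) : Prop :=
  ∀ (x : ι → E) (v : E), T (fun i => x i + v) = T x + v

theorem lt_norm_sub_or_lt_norm_sub {E : Type*} [SeminormedAddCommGroup E]
    {M : ℝ} {a b c : E} (h : 2 * M < ‖a - b‖) : M < ‖a - c‖ ∨ M < ‖b - c‖ := by
  by_contra! hle
  have := norm_sub_le_norm_sub_add_norm_sub a c b
  rw [norm_sub_rev c b] at this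
  linarith [hle.1, hle.2]

theorem TranslationEquivariant.exists_lt_norm_sub {ι E : Type*} [SeminormedAddCommGroup E]
    {T : (ι → E) → E} (hT : TranslationEquivariant T) (X : ι → E) (s : Set ι) {M : ℝ} {v : E}
    (hv : 2 * M < ‖v‖) :
    ∃ X' : ι → E, ({i | X' i ≠ X i} ⊆ s ∨ {i | X' i ≠ X i} ⊆ sᶜ) ∧ M < ‖T X' - T X‖ := by
  set W : ι → E := fun i => if i ∈ s then X i else X i - v
  set Z : ι → E := fun i => W i + v
  have hZW : T Z - T W = v := by rw [hT]; abel
  have hZ : {i | Z i ≠ X i} ⊆ s := fun i hi => by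
    by_contra h
    simp [Z, W, h] at hi
  have hW : {i | W i ≠ X i} ⊆ sᶜ := fun i hi h => by simp [W, h] at hi
  rcases lt_norm_sub_or_lt_norm_sub (c := T X) (hZW ▸ hv) with h | h
  · exact ⟨Z, .inl hZ, h⟩
  · exact ⟨W, .inr hW, h⟩

theorem translation_equivariant_breakdown_bound_general {k n : ℕ} (hk : 1 ≤ k)
    (T : (Fin n → EuclideanSpace ℝ (Fin k)) → EuclideanSpace ℝ (Fin k))
    (hequiv : ∀ (x : Fin n → EuclideanSpace ℝ (Fin k)) (v : EuclideanSpace ℝ (Fin k)),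
      T (fun i => x i + v) = T x + v)
    (X : Fin n → EuclideanSpace ℝ (Fin k)) :
    ∀ M : ℝ, ∃ X' : Fin n → EuclideanSpace ℝ (Fin k),
      (univ.filter fun i => X' i ≠ X i).card ≤ (n + 1) / 2 ∧ M < ‖T X' - T X‖ := by
  intro M
  have : Nonempty (Fin k) := ⟨⟨0, hk⟩⟩
  obtain ⟨v, hv⟩ := NormedSpace.exists_lt_norm ℝ (EuclideanSpace ℝ (Fin k)) (2 * M)
  obtain ⟨s, -, hs⟩ := exists_subset_card_eq (s := (univ : Finset (Fin n))) (n := (n + 1) / 2)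
    (by rw [card_univ, Fintype.card_fin]; omega)
  obtain ⟨X', hX', hM⟩ := TranslationEquivariant.exists_lt_norm_sub hequiv X s hv
  refine ⟨X', ?_, hM⟩
  rcases hX' with hsub | hsub
  · calc _ ≤ s.card := card_le_card fun i hi => hsub (by simpa using hi)
      _ = _ := hs
  · calc _ ≤ sᶜ.card := card_le_card fun i hi => by simpa using hsub (by simpa using hi)
      _ ≤ _ := by rw [card_compl, hs, Fintype.card_fin]; omega

/-- Any translation equivariant location estimator breaks down after replacing
⌊(n+1)/2⌋ of the n points, i.e. its finite-sample replacement breakdown value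
is at most ⌊(n+1)/2⌋ / n. -/
theorem translation_equivariant_breakdown_bound {k n : ℕ} (hk : 1 ≤ k) (hn : 1 ≤ n)
    (T : (Fin n → EuclideanSpace ℝ (Fin k)) → EuclideanSpace ℝ (Fin k))
    (hequiv : ∀ (x : Fin n → EuclideanSpace ℝ (Fin k)) (v : EuclideanSpace ℝ (Fin k)),
      T (fun i => x i + v) = T x + v)
    (X : Fin n → EuclideanSpace ℝ (Fin k)) :
    ∀ M : ℝ, ∃ X' : Fin n → EuclideanSpace ℝ (Fin k),
      (univ.filter fun i => X' i ≠ X i).card ≤ (n + 1) / 2 ∧ M < ‖T X' - T X‖ :=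
  translation_equivariant_breakdown_bound_general hk T hequiv X
end
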